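/- In the gadget graph for one missing entry, if artificial variable X_{j₀} selects the empty parent set and all others select their score-0 parent sets (which include all m original variables as parents), then no original variable can have any artificial variable other than X_{j₀} as a parent without creating a directed cycle; hence X_{j₀} is the only artificial variable of the gadget usable as a parent of original variables. -/

import Mathlib

/-!
Adding `X_j → v` for `j ≠ j₀` closes the 2-cycle `v → X_j → v`. Adding arcs out of
`X_{j₀}` keeps the graph acyclic because the rank `X_{j₀} ↦ r + 1`, original nodes `↦ r`,
`X_j ↦ (j - j₀).val` strictly decreases along every arc: a chain arc `X_{j+1} → X_j` lowers
`(j - j₀).val` by one, except the arc out of `X_{j₀}`, which starts at the top rank.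
-/

/-- Base arcs of the gadget graph on original nodes `V` and artificial nodes
`Fin r`, when `X_{j₀}` has the empty parent set and every other `X_j` has as
parents all original variables plus `X_{1+(j mod r)}`. -/
def baseRel (V : Type) (r : ℕ) [NeZero r] (j₀ : Fin r) (a b : V ⊕ Fin r) : Prop :=
  ∃ j : Fin r, j ≠ j₀ ∧ b = Sum.inr j ∧
    ((∃ v : V, a = Sum.inl v) ∨ a = Sum.inr (j + 1))

theorem Relation.TransGen.not_refl_of_lt_rank {α β : Type*} [Preorder β] {r : α → α → Prop}
    (f : α → β) (hf : ∀ a b, r a b → f b < f a) (a : α) : ¬ Relation.TransGen r a a := by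
  intro hcycle
  have hlt : Relation.TransGen (fun x y : β => y < x) (f a) (f a) := hcycle.lift f hf
  rw [Relation.transGen_eq_self] at hlt
  exact lt_irrefl _ hlt

theorem Fin.val_lt_val_add_one {n : ℕ} [NeZero n] {k : Fin n} (hk : k + 1 ≠ 0) :
    k.val < (k + 1).val := by
  obtain ⟨n, rfl⟩ := Nat.exists_eq_succ_of_ne_zero (NeZero.ne n)
  rw [Fin.val_add_one, if_neg]
  · exact Nat.lt_succ_self _
  · rintro rfl
    exact hk (Fin.last_add_one n)

theorem baseRel_inl_inr {V : Type} {r : ℕ} [NeZero r] {j₀ j : Fin r} (hj : j ≠ j₀) (v : V) :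
    baseRel V r j₀ (Sum.inl v) (Sum.inr j) :=
  ⟨j, hj, rfl, Or.inl ⟨v, rfl⟩⟩

def gadgetRank (V : Type) {r : ℕ} (j₀ : Fin r) : V ⊕ Fin r → ℕ :=
  Sum.elim (fun _ => r) (fun j => if j = j₀ then r + 1 else (j - j₀).val)

theorem gadgetRank_lt_of_baseRel {V : Type} {r : ℕ} [NeZero r] {j₀ : Fin r} {a b : V ⊕ Fin r}
    (hab : baseRel V r j₀ a b) : gadgetRank V j₀ b < gadgetRank V j₀ a := by
  obtain ⟨j, hj, rfl, ⟨v, rfl⟩ | rfl⟩ := hab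
  · simp [gadgetRank, hj]
  · by_cases hj₁ : j + 1 = j₀
    · simp [gadgetRank, hj, hj₁]
    · have hshift : j + 1 - j₀ = (j - j₀) + 1 := by abel
      have hne : (j - j₀) + 1 ≠ 0 := by rwa [← hshift, sub_ne_zero]
      simpa [gadgetRank, hj, hj₁, hshift] using Fin.val_lt_val_add_one hne

theorem stmt19_general (V : Type) (r : ℕ) [NeZero r] (j₀ : Fin r) :
    (∀ (j : Fin r) (v : V), j ≠ j₀ →
      ∃ a : V ⊕ Fin r, Relation.TransGen
        (fun x y => baseRel V r j₀ x y ∨ (x = Sum.inr j ∧ y = Sum.inl v)) a a) ∧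
    (∀ W : Set V, ∀ a : V ⊕ Fin r,
      ¬ Relation.TransGen
        (fun x y => baseRel V r j₀ x y ∨ (x = Sum.inr j₀ ∧ ∃ v ∈ W, y = Sum.inl v))
        a a) := by
  refine ⟨fun j v hj =>
      ⟨Sum.inl v, .head (.inl (baseRel_inl_inr hj v)) (.single (.inr ⟨rfl, rfl⟩))⟩,
    fun W => Relation.TransGen.not_refl_of_lt_rank (gadgetRank V j₀) ?_⟩
  rintro a b (hab | ⟨rfl, v, -, rfl⟩)
  · exact gadgetRank_lt_of_baseRel hab
  · simp [gadgetRank]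

/-- adding an arc from any artificial variable `X_j` with `j ≠ j₀`
to an original node creates a directed cycle, while adding arcs from `X_{j₀}`
(which has no parents) to any set of original nodes preserves acyclicity. -/
theorem stmt19 (V : Type) [Fintype V] (r : ℕ) [NeZero r] (hr : 2 ≤ r) (j₀ : Fin r) :
    (∀ (j : Fin r) (v : V), j ≠ j₀ →
      ∃ a : V ⊕ Fin r, Relation.TransGen
        (fun x y => baseRel V r j₀ x y ∨ (x = Sum.inr j ∧ y = Sum.inl v)) a a) ∧
    (∀ W : Set V, ∀ a : V ⊕ Fin r,
      ¬ Relation.TransGen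
        (fun x y => baseRel V r j₀ x y ∨ (x = Sum.inr j₀ ∧ ∃ v ∈ W, y = Sum.inl v))
        a a) :=
  stmt19_general V r j₀
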